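/- arXiv:1809.05308 — 3 statements merged into one kernel-verified Lean document; each statement's English description precedes it below -/
import Mathlib

section
/- Let P ∈ 𝒮⁺(H) be such that ∑_{j=1}^∞ ⟨P C_j x, C_j x⟩ < ∞ for every x ∈ H. Then for each x ∈ H the partial sums ∑_{j=1}^N D_j* P C_j x converge in U as N → ∞, and the limit ∑_{j=1}^∞ D_j* P C_j x satisfies, with C := (c‖P‖)^{1/2}, the estimate |∑_{j=1}^∞ D_j* P C_j x|_U ≤ C (∑_{j=1}^∞ ⟨P C_j x, C_j x⟩)^{1/2} for all x ∈ H. -/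
open scoped RealInnerProductSpace
open Filter

/-!
With `y = ∑_{j ∈ F} D_j* P C_j x` for a finite `F`, pairing `y` with itself gives
`‖y‖² = ∑_{j ∈ F} ⟪P C_j x, D_j y⟫`. Cauchy–Schwarz for the positive semidefinite form
`(f, g) ↦ ∑_{j ∈ F} ⟪P f_j, g_j⟫` bounds this by `(∑_F ⟪P C_j x, C_j x⟫)^{1/2} (c ‖P‖)^{1/2} ‖y‖`,
so `‖y‖² ≤ c ‖P‖ ∑_F ⟪P C_j x, C_j x⟫` uniformly in `F`. The Cauchy criterion for the scalar
series therefore transfers to the vector series, and the bound passes to the limit.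
-/

namespace ContinuousLinearMap

variable {ι H : Type*} [NormedAddCommGroup H] [InnerProductSpace ℝ H]

theorem IsPositive.sum_inner_sq_le {P : H →L[ℝ] H} (hP : P.IsPositive) (s : Finset ι)
    (u w : ι → H) :
    (∑ i ∈ s, ⟪P (u i), w i⟫) ^ 2 ≤
      (∑ i ∈ s, ⟪P (u i), u i⟫) * ∑ i ∈ s, ⟪P (w i), w i⟫ := by
  let B : LinearMap.BilinForm ℝ (ι → H) := ∑ i ∈ s,
    (innerₗ H).compl₁₂ ((P : H →ₗ[ℝ] H) ∘ₗ LinearMap.proj i) (LinearMap.proj i)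
  have hB (f g : ι → H) : B f g = ∑ i ∈ s, ⟪P (f i), g i⟫ := by simp [B]
  have hB_nonneg (f : ι → H) : 0 ≤ B f f := by
    rw [hB]; exact Finset.sum_nonneg fun i _ ↦ hP.inner_nonneg_left _
  have hB_symm : LinearMap.IsSymm B := LinearMap.isSymm_def.mpr fun f g ↦ by
    rw [RingHom.id_apply, hB, hB]
    exact Finset.sum_congr rfl fun i _ ↦ by rw [hP.inner_left_eq_inner_right, real_inner_comm]
  simpa only [hB] using B.apply_sq_le_of_symm hB_nonneg hB_symm u w

variable {U : Type*} [NormedAddCommGroup U] [InnerProductSpace ℝ U]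

theorem sum_inner_apply_self_le (P : H →L[ℝ] H) {D : ι → U →L[ℝ] H} {c : ℝ}
    {v : U} (hDsum : Summable fun i ↦ ‖D i v‖ ^ 2) (hD : ∑' i, ‖D i v‖ ^ 2 ≤ c * ‖v‖ ^ 2)
    (s : Finset ι) : ∑ i ∈ s, ⟪P (D i v), D i v⟫ ≤ c * ‖P‖ * ‖v‖ ^ 2 := by
  have hP_le (z : H) : ⟪P z, z⟫ ≤ ‖P‖ * ‖z‖ ^ 2 :=
    calc ⟪P z, z⟫ ≤ ‖P z‖ * ‖z‖ := real_inner_le_norm _ _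
      _ ≤ ‖P‖ * ‖z‖ * ‖z‖ := by gcongr; exact P.le_opNorm z
      _ = ‖P‖ * ‖z‖ ^ 2 := by ring
  calc ∑ i ∈ s, ⟪P (D i v), D i v⟫ ≤ ‖P‖ * ∑ i ∈ s, ‖D i v‖ ^ 2 := by
        rw [Finset.mul_sum]; exact Finset.sum_le_sum fun i _ ↦ hP_le _
    _ ≤ ‖P‖ * ∑' i, ‖D i v‖ ^ 2 := by
        gcongr; exact hDsum.sum_le_tsum s fun i _ ↦ by positivity
    _ ≤ ‖P‖ * (c * ‖v‖ ^ 2) := by gcongr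
    _ = c * ‖P‖ * ‖v‖ ^ 2 := by ring

variable [CompleteSpace H] [CompleteSpace U]

theorem IsPositive.norm_sum_adjoint_sq_le {P : H →L[ℝ] H} (hP : P.IsPositive)
    {D : ι → U →L[ℝ] H} {c : ℝ} (hc : 0 ≤ c)
    (hDsum : ∀ v, Summable fun i ↦ ‖D i v‖ ^ 2) (hD : ∀ v, ∑' i, ‖D i v‖ ^ 2 ≤ c * ‖v‖ ^ 2)
    (s : Finset ι) (u : ι → H) :
    ‖∑ i ∈ s, adjoint (D i) (P (u i))‖ ^ 2 ≤ c * ‖P‖ * ∑ i ∈ s, ⟪P (u i), u i⟫ := by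
  set y := ∑ i ∈ s, adjoint (D i) (P (u i))
  set T := ∑ i ∈ s, ⟪P (u i), u i⟫
  have hT : 0 ≤ T := Finset.sum_nonneg fun i _ ↦ hP.inner_nonneg_left _
  have hy : ‖y‖ ^ 2 = ∑ i ∈ s, ⟪P (u i), D i y⟫ := by
    rw [← real_inner_self_eq_norm_sq, sum_inner]
    exact Finset.sum_congr rfl fun i _ ↦ adjoint_inner_left _ _ _
  have hy_sq : (‖y‖ ^ 2) ^ 2 ≤ (c * ‖P‖ * T) * ‖y‖ ^ 2 :=
    calc (‖y‖ ^ 2) ^ 2 ≤ T * ∑ i ∈ s, ⟪P (D i y), D i y⟫ :=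
          hy ▸ hP.sum_inner_sq_le s u fun i ↦ D i y
      _ ≤ T * (c * ‖P‖ * ‖y‖ ^ 2) := by
          gcongr; exact sum_inner_apply_self_le P (hDsum y) (hD y) s
      _ = (c * ‖P‖ * T) * ‖y‖ ^ 2 := by ring
  have hK : 0 ≤ c * ‖P‖ * T := by positivity
  nlinarith [sq_nonneg ‖y‖]

end ContinuousLinearMap

section

variable {ι E : Type*} [NormedAddCommGroup E] {a : ι → E} {t : ι → ℝ} {K : ℝ}

theorem summable_of_norm_sq_sum_le [CompleteSpace E] (ht : Summable t)
    (h : ∀ s : Finset ι, ‖∑ i ∈ s, a i‖ ^ 2 ≤ K * ∑ i ∈ s, t i) : Summable a := by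
  rw [summable_iff_vanishing_norm]
  intro ε hε
  obtain ⟨s₀, hs₀⟩ := summable_iff_vanishing_norm.mp ht (ε ^ 2 / (|K| + 1)) (by positivity)
  refine ⟨s₀, fun s hs ↦ ?_⟩
  have hts : |∑ i ∈ s, t i| * (|K| + 1) < ε ^ 2 := by
    rw [← lt_div_iff₀ (by positivity)]; exact hs₀ s hs
  have hsq : ‖∑ i ∈ s, a i‖ ^ 2 < ε ^ 2 :=
    calc ‖∑ i ∈ s, a i‖ ^ 2 ≤ |K| * |∑ i ∈ s, t i| :=
          (h s).trans ((le_abs_self _).trans (abs_mul K _).le)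
      _ < ε ^ 2 := by nlinarith [abs_nonneg K, abs_nonneg (∑ i ∈ s, t i)]
  exact lt_of_pow_lt_pow_left₀ 2 hε.le hsq

theorem norm_tsum_sq_le_of_norm_sq_sum_le (ha : Summable a) (ht : Summable t)
    (h : ∀ s : Finset ι, ‖∑ i ∈ s, a i‖ ^ 2 ≤ K * ∑ i ∈ s, t i) :
    ‖∑' i, a i‖ ^ 2 ≤ K * ∑' i, t i :=
  le_of_tendsto_of_tendsto' (ha.hasSum.norm.pow 2) (ht.hasSum.const_mul K) h

end

/-- If `P ∈ 𝒮⁺(H)` is such that `∑_j ⟨P C_j x, C_j x⟩ < ∞` for every `x ∈ H`,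
then for each `x` the partial sums `∑_{j<N} D_j* P C_j x` converge in `U`, and the limit `L`
satisfies `‖L‖ ≤ (c‖P‖)^{1/2} (∑_j ⟨P C_j x, C_j x⟩)^{1/2}`. -/
theorem stmt0
    {H U : Type*}
    [NormedAddCommGroup H] [InnerProductSpace ℝ H] [CompleteSpace H]
    [NormedAddCommGroup U] [InnerProductSpace ℝ U] [CompleteSpace U]
    (C : ℕ → H →L[ℝ] H) (D : ℕ → U →L[ℝ] H) (c : ℝ) (hc : 0 < c)
    (hDsum : ∀ v : U, Summable fun j => ‖D j v‖ ^ 2)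
    (hD : ∀ v : U, ∑' j, ‖D j v‖ ^ 2 ≤ c * ‖v‖ ^ 2)
    (P : H →L[ℝ] H) (hPsa : IsSelfAdjoint P)
    (hPpos : ∀ x : H, 0 ≤ ⟪P x, x⟫)
    (hPC : ∀ x : H, Summable fun j => ⟪P (C j x), C j x⟫) :
    ∀ x : H, ∃ L : U,
      Tendsto (fun N => ∑ j ∈ Finset.range N,
          (ContinuousLinearMap.adjoint (D j)) (P (C j x))) atTop (nhds L) ∧
      ‖L‖ ≤ Real.sqrt (c * ‖P‖) * Real.sqrt (∑' j, ⟪P (C j x), C j x⟫) := by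
  intro x
  have hP : P.IsPositive := ContinuousLinearMap.isPositive_def'.mpr ⟨hPsa, hPpos⟩
  have hbound (s : Finset ℕ) := hP.norm_sum_adjoint_sq_le hc.le hDsum hD s fun j ↦ C j x
  have hsum := summable_of_norm_sq_sum_le (hPC x) hbound
  refine ⟨_, hsum.hasSum.tendsto_sum_nat, ?_⟩
  rw [← Real.sqrt_mul (by positivity)]
  exact Real.le_sqrt_of_sq_le (norm_tsum_sq_le_of_norm_sq_sum_le hsum (hPC x) hbound)
end

section
/- Let P ∈ 𝒮⁺(H) be such that ∑_{j=1}^∞ ⟨P C_j x, C_j x⟩ < ∞ for every x ∈ H. Then for every finite set J ⊂ ℕ and every x ∈ H one has |∑_{j∈J} D_j* P C_j x|_U² ≤ c‖P‖ · ∑_{j∈J} ⟨P C_j x, C_j x⟩. -/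
/-!
With `S = ∑ⱼ Dⱼ* P yⱼ` one has `‖S‖² = ∑ⱼ ⟪P yⱼ, Dⱼ S⟫`. Cauchy–Schwarz for the semi-inner
product `⟪P ·, ·⟫`, summed over `j`, bounds `‖S‖⁴` by `(∑ⱼ ⟪P yⱼ, yⱼ⟫) (∑ⱼ ⟪P Dⱼ S, Dⱼ S⟫)`,
and the second factor is at most `‖P‖ ∑ⱼ ‖Dⱼ S‖² ≤ c ‖P‖ ‖S‖²`; cancel one `‖S‖²`.
-/

open scoped RealInnerProductSpace

namespace ContinuousLinearMap

variable {E : Type*} [NormedAddCommGroup E] [InnerProductSpace ℝ E]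

theorem IsPositive.sq_sum_inner_le {ι : Type*} {T : E →L[ℝ] E} (hT : T.IsPositive)
    (s : Finset ι) (a b : ι → E) :
    (∑ i ∈ s, ⟪T (a i), b i⟫) ^ 2
      ≤ (∑ i ∈ s, ⟪T (a i), a i⟫) * ∑ i ∈ s, ⟪T (b i), b i⟫ := by
  have hquad : ∀ t : ℝ, 0 ≤ (∑ i ∈ s, ⟪T (b i), b i⟫) * (t * t)
      + (2 * ∑ i ∈ s, ⟪T (a i), b i⟫) * t + ∑ i ∈ s, ⟪T (a i), a i⟫ := by
    intro t
    have hexpand : ∀ i, ⟪T (a i + t • b i), a i + t • b i⟫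
        = ⟪T (b i), b i⟫ * (t * t) + 2 * ⟪T (a i), b i⟫ * t + ⟪T (a i), a i⟫ := by
      intro i
      have hsymm : ⟪T (b i), a i⟫ = ⟪T (a i), b i⟫ := by
        rw [hT.inner_left_eq_inner_right, real_inner_comm]
      simp only [map_add, map_smul, inner_add_left, inner_add_right, real_inner_smul_left,
        real_inner_smul_right, hsymm]
      ring
    have := Finset.sum_nonneg fun i (_ : i ∈ s) => hT.inner_nonneg_left (a i + t • b i)
    simpa only [hexpand, Finset.sum_add_distrib, ← Finset.sum_mul, ← Finset.mul_sum] using this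
  have := discrim_le_zero hquad
  rw [discrim] at this
  linarith

theorem real_inner_apply_self_le (T : E →L[ℝ] E) (x : E) : ⟪T x, x⟫ ≤ ‖T‖ * ‖x‖ ^ 2 :=
  calc ⟪T x, x⟫ ≤ ‖T x‖ * ‖x‖ := real_inner_le_norm _ _
    _ ≤ ‖T‖ * ‖x‖ * ‖x‖ := by gcongr; exact T.le_opNorm x
    _ = ‖T‖ * ‖x‖ ^ 2 := by ring

end ContinuousLinearMap

open ContinuousLinearMap in
theorem norm_sum_adjoint_apply_sq_le {H U ι : Type*}
    [NormedAddCommGroup H] [InnerProductSpace ℝ H] [CompleteSpace H]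
    [NormedAddCommGroup U] [InnerProductSpace ℝ U] [CompleteSpace U]
    (s : Finset ι) (D : ι → U →L[ℝ] H) {c : ℝ} (hc : 0 ≤ c)
    (hD : ∀ v : U, ∑ j ∈ s, ‖D j v‖ ^ 2 ≤ c * ‖v‖ ^ 2)
    {P : H →L[ℝ] H} (hP : P.IsPositive) (y : ι → H) :
    ‖∑ j ∈ s, adjoint (D j) (P (y j))‖ ^ 2 ≤ c * ‖P‖ * ∑ j ∈ s, ⟪P (y j), y j⟫ := by
  set S := ∑ j ∈ s, adjoint (D j) (P (y j))
  set A := ∑ j ∈ s, ⟪P (y j), y j⟫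
  have hA : 0 ≤ A := Finset.sum_nonneg fun j _ => hP.inner_nonneg_left _
  have hS : ‖S‖ ^ 2 = ∑ j ∈ s, ⟪P (y j), D j S⟫ := by
    simp only [← real_inner_self_eq_norm_sq, S, sum_inner, adjoint_inner_left]
  have hDS : ∑ j ∈ s, ⟪P (D j S), D j S⟫ ≤ ‖P‖ * (c * ‖S‖ ^ 2) :=
    calc ∑ j ∈ s, ⟪P (D j S), D j S⟫ ≤ ∑ j ∈ s, ‖P‖ * ‖D j S‖ ^ 2 :=
          Finset.sum_le_sum fun j _ => P.real_inner_apply_self_le _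
      _ = ‖P‖ * ∑ j ∈ s, ‖D j S‖ ^ 2 := (Finset.mul_sum _ _ _).symm
      _ ≤ ‖P‖ * (c * ‖S‖ ^ 2) := by gcongr; exact hD S
  have key : (‖S‖ ^ 2) ^ 2 ≤ (c * ‖P‖ * A) * ‖S‖ ^ 2 :=
    calc (‖S‖ ^ 2) ^ 2 ≤ A * ∑ j ∈ s, ⟪P (D j S), D j S⟫ := hS ▸ hP.sq_sum_inner_le s y _
      _ ≤ A * (‖P‖ * (c * ‖S‖ ^ 2)) := by gcongr
      _ = (c * ‖P‖ * A) * ‖S‖ ^ 2 := by ring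
  have hK : 0 ≤ c * ‖P‖ * A := by positivity
  nlinarith [sq_nonneg ‖S‖]

theorem stmt1_general
    {H U : Type*}
    [NormedAddCommGroup H] [InnerProductSpace ℝ H] [CompleteSpace H]
    [NormedAddCommGroup U] [InnerProductSpace ℝ U] [CompleteSpace U]
    (C : ℕ → H →L[ℝ] H) (D : ℕ → U →L[ℝ] H) (c : ℝ) (hc : 0 < c)
    (hDsum : ∀ v : U, Summable fun j => ‖D j v‖ ^ 2)
    (hD : ∀ v : U, ∑' j, ‖D j v‖ ^ 2 ≤ c * ‖v‖ ^ 2)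
    (P : H →L[ℝ] H) (hPsa : IsSelfAdjoint P)
    (hPpos : ∀ x : H, 0 ≤ ⟪P x, x⟫) :
    ∀ (J : Finset ℕ) (x : H),
      ‖∑ j ∈ J, (ContinuousLinearMap.adjoint (D j)) (P (C j x))‖ ^ 2
        ≤ c * ‖P‖ * ∑ j ∈ J, ⟪P (C j x), C j x⟫ := by
  intro J x
  have hP : P.IsPositive := (P.isPositive_iff').mpr ⟨hPsa, hPpos⟩
  refine norm_sum_adjoint_apply_sq_le J D hc.le (fun v => ?_) hP fun j => C j x
  exact ((hDsum v).sum_le_tsum J fun j _ => sq_nonneg _).trans (hD v)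

/-- If `P ∈ 𝒮⁺(H)` is such that `∑_j ⟨P C_j x, C_j x⟩ < ∞` for every `x ∈ H`,
then for every finite set `J ⊂ ℕ` and every `x ∈ H`,
`‖∑_{j∈J} D_j* P C_j x‖² ≤ c‖P‖ ∑_{j∈J} ⟨P C_j x, C_j x⟩`. -/
theorem stmt1
    {H U : Type*}
    [NormedAddCommGroup H] [InnerProductSpace ℝ H] [CompleteSpace H]
    [NormedAddCommGroup U] [InnerProductSpace ℝ U] [CompleteSpace U]
    (C : ℕ → H →L[ℝ] H) (D : ℕ → U →L[ℝ] H) (c : ℝ) (hc : 0 < c)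
    (hDsum : ∀ v : U, Summable fun j => ‖D j v‖ ^ 2)
    (hD : ∀ v : U, ∑' j, ‖D j v‖ ^ 2 ≤ c * ‖v‖ ^ 2)
    (P : H →L[ℝ] H) (hPsa : IsSelfAdjoint P)
    (hPpos : ∀ x : H, 0 ≤ ⟪P x, x⟫)
    (hPC : ∀ x : H, Summable fun j => ⟪P (C j x), C j x⟫) :
    ∀ (J : Finset ℕ) (x : H),
      ‖∑ j ∈ J, (ContinuousLinearMap.adjoint (D j)) (P (C j x))‖ ^ 2
        ≤ c * ‖P‖ * ∑ j ∈ J, ⟪P (C j x), C j x⟫ :=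
  stmt1_general C D c hc hDsum hD P hPsa hPpos
end

section
/- Let (P^N)_{N∈ℕ} be a non-increasing sequence in 𝒮⁺(H) (P^{N+1} ≤ P^N for all N) converging strongly to P ∈ 𝒮⁺(H) (P^N x → P x for all x), and suppose ∑_{j=1}^∞ ⟨P^1 C_j x, C_j x⟩ < ∞ for every x ∈ H. Then for every x ∈ H, the vectors ∑_{j=1}^∞ D_j* P^N C_j x (each defined as the strong limit of partial sums) converge in U to ∑_{j=1}^∞ D_j* P C_j x as N → ∞. -/
/-!
Write `Q N = P N - Pinf`. Monotonicity and strong convergence give `0 ≤ Q N ≤ P 0` in the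
Loewner order. Pairing `∑_{j<M} (D j)† (Q N (C j x))` with `v ∈ U` and applying Cauchy–Schwarz
twice, first for the positive form `⟪Q N ·, ·⟫` and then for finite sums, bounds its norm by
`√(∑' j, ⟪Q N (C j x), C j x⟫) * √(‖P 0‖ * c)`, uniformly in `M`. The first factor tends to zero
by dominated convergence, with dominating sequence `⟪P 0 (C j x), C j x⟫`.
-/

open scoped RealInnerProductSpace
open Filter

namespace ContinuousLinearMap

variable {H U : Type*} [NormedAddCommGroup H] [InnerProductSpace ℝ H]
  [NormedAddCommGroup U] [InnerProductSpace ℝ U]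

theorem IsPositive.abs_inner_le_sqrt_mul_sqrt {Q : H →L[ℝ] H} (hQ : Q.IsPositive) (a b : H) :
    |⟪Q a, b⟫| ≤ √⟪Q a, a⟫ * √⟪Q b, b⟫ := by
  have hCS := LinearMap.BilinForm.apply_mul_apply_le_of_forall_zero_le
    ((innerₗ H) ∘ₗ (Q : H →ₗ[ℝ] H)) hQ.inner_nonneg_left a b
  simp only [LinearMap.comp_apply, coe_coe, innerₗ_apply_apply] at hCS
  rw [hQ.inner_left_eq_inner_right b, real_inner_comm (Q a) b] at hCS
  rw [← Real.sqrt_mul (hQ.inner_nonneg_left a)]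
  exact Real.abs_le_sqrt (by rwa [sq])

theorem real_inner_apply_self_le_norm_mul_sq (R : H →L[ℝ] H) (y : H) :
    ⟪R y, y⟫ ≤ ‖R‖ * ‖y‖ ^ 2 :=
  calc ⟪R y, y⟫ ≤ ‖R y‖ * ‖y‖ := real_inner_le_norm _ _
    _ ≤ ‖R‖ * ‖y‖ * ‖y‖ := by gcongr; exact R.le_opNorm y
    _ = ‖R‖ * ‖y‖ ^ 2 := by ring

theorem real_inner_apply_self_le_of_le {T R : H →L[ℝ] H} (h : T ≤ R) (y : H) :
    ⟪T y, y⟫ ≤ ⟪R y, y⟫ := by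
  simpa [inner_sub_left] using ((le_def T R).1 h).inner_nonneg_left y

theorem sub_le_of_le_of_isPositive {T R S : H →L[ℝ] H} (h : T ≤ R) (hS : S.IsPositive) :
    T - S ≤ R := by
  rw [le_def, sub_sub_eq_add_sub, add_sub_right_comm]
  exact h.add hS

theorem sum_inner_apply_self_le_of_le {ι : Type*} {Q R : H →L[ℝ] H} (hQR : Q ≤ R)
    {D : ι → U →L[ℝ] H} {c : ℝ} (hDsum : ∀ v, Summable fun j => ‖D j v‖ ^ 2)
    (hD : ∀ v, ∑' j, ‖D j v‖ ^ 2 ≤ c * ‖v‖ ^ 2) (s : Finset ι) (v : U) :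
    ∑ j ∈ s, ⟪Q (D j v), D j v⟫ ≤ ‖R‖ * c * ‖v‖ ^ 2 :=
  calc ∑ j ∈ s, ⟪Q (D j v), D j v⟫ ≤ ∑ j ∈ s, ‖R‖ * ‖D j v‖ ^ 2 :=
        Finset.sum_le_sum fun _ _ => (real_inner_apply_self_le_of_le hQR _).trans
          (real_inner_apply_self_le_norm_mul_sq R _)
    _ = ‖R‖ * ∑ j ∈ s, ‖D j v‖ ^ 2 := (Finset.mul_sum _ _ _).symm
    _ ≤ ‖R‖ * (c * ‖v‖ ^ 2) := by
        gcongr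
        exact ((hDsum v).sum_le_tsum s fun _ _ => sq_nonneg _).trans (hD v)
    _ = ‖R‖ * c * ‖v‖ ^ 2 := (mul_assoc _ _ _).symm

theorem norm_sum_adjoint_apply_le [CompleteSpace H] [CompleteSpace U] {ι : Type*}
    (s : Finset ι) {Q : H →L[ℝ] H} (hQ : Q.IsPositive) (D : ι → U →L[ℝ] H) (y : ι → H)
    {K : ℝ} (hK : ∀ v, ∑ j ∈ s, ⟪Q (D j v), D j v⟫ ≤ K * ‖v‖ ^ 2) :
    ‖∑ j ∈ s, adjoint (D j) (Q (y j))‖ ≤ √(∑ j ∈ s, ⟪Q (y j), y j⟫) * √K := by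
  set w := ∑ j ∈ s, adjoint (D j) (Q (y j))
  have hw : ∀ v, |⟪w, v⟫| ≤ √(∑ j ∈ s, ⟪Q (y j), y j⟫) * √K * ‖v‖ := fun v =>
    calc |⟪w, v⟫| = |∑ j ∈ s, ⟪Q (y j), D j v⟫| := by
          simp only [w, sum_inner, adjoint_inner_left]
      _ ≤ ∑ j ∈ s, √⟪Q (y j), y j⟫ * √⟪Q (D j v), D j v⟫ :=
          (Finset.abs_sum_le_sum_abs _ _).trans
            (Finset.sum_le_sum fun _ _ => hQ.abs_inner_le_sqrt_mul_sqrt _ _)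
      _ ≤ √(∑ j ∈ s, ⟪Q (y j), y j⟫) * √(∑ j ∈ s, ⟪Q (D j v), D j v⟫) :=
          Real.sum_sqrt_mul_sqrt_le _ (fun _ => hQ.inner_nonneg_left _)
            (fun _ => hQ.inner_nonneg_left _)
      _ ≤ √(∑ j ∈ s, ⟪Q (y j), y j⟫) * √(K * ‖v‖ ^ 2) := by gcongr; exact hK v
      _ = √(∑ j ∈ s, ⟪Q (y j), y j⟫) * √K * ‖v‖ := by
          rw [Real.sqrt_mul' _ (sq_nonneg _), Real.sqrt_sq (norm_nonneg _), mul_assoc]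
  rw [← innerSL_apply_norm ℝ w]
  exact opNorm_le_bound _ (by positivity) hw

theorem le_of_antitone_of_tendsto [CompleteSpace H] {P : ℕ → H →L[ℝ] H} {Pinf : H →L[ℝ] H}
    (hP : Antitone P) (hPsa : ∀ N, IsSelfAdjoint (P N)) (hPinf : IsSelfAdjoint Pinf)
    (hlim : ∀ x, Tendsto (fun N => P N x) atTop (nhds (Pinf x))) (N : ℕ) : Pinf ≤ P N := by
  refine (isPositive_iff' _).2 ⟨(hPsa N).sub hPinf, fun x => ?_⟩
  have hinner : Tendsto (fun n => ⟪P n x, x⟫) atTop (nhds ⟪Pinf x, x⟫) :=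
    (hlim x).inner tendsto_const_nhds
  have : ⟪Pinf x, x⟫ ≤ ⟪P N x, x⟫ := le_of_tendsto hinner
    (eventually_atTop.2 ⟨N, fun n hn => real_inner_apply_self_le_of_le (hP hn) x⟩)
  simpa [inner_sub_left] using this

theorem summable_inner_apply_self_of_le {Q R : H →L[ℝ] H} (hQ : Q.IsPositive) (hQR : Q ≤ R)
    {y : ℕ → H} (hy : Summable fun j => ⟪R (y j), y j⟫) :
    Summable fun j => ⟪Q (y j), y j⟫ :=
  hy.of_nonneg_of_le (fun _ => hQ.inner_nonneg_left _)
    (fun _ => real_inner_apply_self_le_of_le hQR _)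

theorem tendsto_tsum_inner_apply_self {Q : ℕ → H →L[ℝ] H} {R : H →L[ℝ] H}
    (hQ : ∀ N, (Q N).IsPositive) (hQR : ∀ N, Q N ≤ R)
    (hlim : ∀ x, Tendsto (fun N => Q N x) atTop (nhds 0)) {y : ℕ → H}
    (hy : Summable fun j => ⟪R (y j), y j⟫) :
    Tendsto (fun N => ∑' j, ⟪Q N (y j), y j⟫) atTop (nhds 0) := by
  have hbound : ∀ N j, ‖⟪Q N (y j), y j⟫‖ ≤ ⟪R (y j), y j⟫ := fun N j => by
    rw [Real.norm_of_nonneg ((hQ N).inner_nonneg_left _)]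
    exact real_inner_apply_self_le_of_le (hQR N) _
  have hterm : ∀ j, Tendsto (fun N => ⟪Q N (y j), y j⟫) atTop (nhds 0) := fun j => by
    simpa using (hlim (y j)).inner (tendsto_const_nhds (x := y j))
  simpa using tendsto_tsum_of_dominated_convergence hy hterm (Eventually.of_forall hbound)

end ContinuousLinearMap

theorem stmt6_general
    {H U : Type*}
    [NormedAddCommGroup H] [InnerProductSpace ℝ H] [CompleteSpace H]
    [NormedAddCommGroup U] [InnerProductSpace ℝ U] [CompleteSpace U]
    (C : ℕ → H →L[ℝ] H) (D : ℕ → U →L[ℝ] H) (c : ℝ)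
    (hDsum : ∀ v : U, Summable fun j => ‖D j v‖ ^ 2)
    (hD : ∀ v : U, ∑' j, ‖D j v‖ ^ 2 ≤ c * ‖v‖ ^ 2)
    (P : ℕ → H →L[ℝ] H) (Pinf : H →L[ℝ] H)
    (hPsa : ∀ N, IsSelfAdjoint (P N))
    (hmono : ∀ N (x : H), ⟪P (N + 1) x, x⟫ ≤ ⟪P N x, x⟫)
    (hPinfsa : IsSelfAdjoint Pinf) (hPinfpos : ∀ x : H, 0 ≤ ⟪Pinf x, x⟫)
    (hstrong : ∀ x : H, Tendsto (fun N => P N x) atTop (nhds (Pinf x)))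
    (hPC : ∀ x : H, Summable fun j => ⟪P 0 (C j x), C j x⟫) :
    ∀ (x : H) (S : ℕ → U) (L : U),
      (∀ N, Tendsto (fun M => ∑ j ∈ Finset.range M,
          (ContinuousLinearMap.adjoint (D j)) (P N (C j x))) atTop (nhds (S N))) →
      Tendsto (fun M => ∑ j ∈ Finset.range M,
          (ContinuousLinearMap.adjoint (D j)) (Pinf (C j x))) atTop (nhds L) →
      Tendsto S atTop (nhds L) := by
  open ContinuousLinearMap in
  intro x S L hS hL
  have hanti : Antitone P := antitone_nat_of_succ_le fun N =>
    (isPositive_iff' _).2 ⟨(hPsa N).sub (hPsa (N + 1)), fun y => by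
      simpa [inner_sub_left] using hmono N y⟩
  have hPinf : Pinf.IsPositive := (isPositive_iff' _).2 ⟨hPinfsa, hPinfpos⟩
  set Q : ℕ → H →L[ℝ] H := fun N => P N - Pinf
  have hQ : ∀ N, (Q N).IsPositive := fun N =>
    (le_def _ _).1 (le_of_antitone_of_tendsto hanti hPsa hPinfsa hstrong N)
  have hQP : ∀ N, Q N ≤ P 0 := fun N => sub_le_of_le_of_isPositive (hanti N.zero_le) hPinf
  set ε : ℕ → ℝ := fun N => ∑' j, ⟪Q N (C j x), C j x⟫
  have hε : Tendsto ε atTop (nhds 0) :=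
    tendsto_tsum_inner_apply_self hQ hQP
      (fun y => by simpa [Q] using (hstrong y).sub_const (Pinf y)) (hPC x)
  have hbound : ∀ N, ‖S N - L‖ ≤ √(ε N) * √(‖P 0‖ * c) := fun N => by
    have hsum : Tendsto (fun M => ∑ j ∈ Finset.range M, adjoint (D j) (Q N (C j x)))
        atTop (nhds (S N - L)) := by
      simpa [Q, Finset.sum_sub_distrib] using (hS N).sub hL
    refine le_of_tendsto hsum.norm (Eventually.of_forall fun M => ?_)
    refine (norm_sum_adjoint_apply_le _ (hQ N) D _
      (sum_inner_apply_self_le_of_le (hQP N) hDsum hD _)).trans ?_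
    gcongr
    exact (summable_inner_apply_self_of_le (hQ N) (hQP N) (hPC x)).sum_le_tsum _
      fun _ _ => (hQ N).inner_nonneg_left _
  rw [tendsto_iff_norm_sub_tendsto_zero]
  refine squeeze_zero (fun N => norm_nonneg _) hbound ?_
  simpa using hε.sqrt.mul_const (√(‖P 0‖ * c))

/-- If `(P^N)` is a non-increasing sequence in `𝒮⁺(H)` converging strongly to
`P ∈ 𝒮⁺(H)`, and `∑_j ⟨P^1 C_j x, C_j x⟩ < ∞` (the first element of the sequence), then for
every `x` the vectors `∑_j D_j* P^N C_j x` (strong limits of partial sums) converge in `U`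
to `∑_j D_j* P C_j x` as `N → ∞`. -/
theorem stmt6
    {H U : Type*}
    [NormedAddCommGroup H] [InnerProductSpace ℝ H] [CompleteSpace H]
    [NormedAddCommGroup U] [InnerProductSpace ℝ U] [CompleteSpace U]
    (C : ℕ → H →L[ℝ] H) (D : ℕ → U →L[ℝ] H) (c : ℝ) (hc : 0 < c)
    (hDsum : ∀ v : U, Summable fun j => ‖D j v‖ ^ 2)
    (hD : ∀ v : U, ∑' j, ‖D j v‖ ^ 2 ≤ c * ‖v‖ ^ 2)
    (P : ℕ → H →L[ℝ] H) (Pinf : H →L[ℝ] H)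
    (hPsa : ∀ N, IsSelfAdjoint (P N)) (hPpos : ∀ N (x : H), 0 ≤ ⟪P N x, x⟫)
    (hmono : ∀ N (x : H), ⟪P (N + 1) x, x⟫ ≤ ⟪P N x, x⟫)
    (hPinfsa : IsSelfAdjoint Pinf) (hPinfpos : ∀ x : H, 0 ≤ ⟪Pinf x, x⟫)
    (hstrong : ∀ x : H, Tendsto (fun N => P N x) atTop (nhds (Pinf x)))
    (hPC : ∀ x : H, Summable fun j => ⟪P 0 (C j x), C j x⟫) :
    ∀ (x : H) (S : ℕ → U) (L : U),
      (∀ N, Tendsto (fun M => ∑ j ∈ Finset.range M,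
          (ContinuousLinearMap.adjoint (D j)) (P N (C j x))) atTop (nhds (S N))) →
      Tendsto (fun M => ∑ j ∈ Finset.range M,
          (ContinuousLinearMap.adjoint (D j)) (Pinf (C j x))) atTop (nhds L) →
      Tendsto S atTop (nhds L) :=
  stmt6_general C D c hDsum hD P Pinf hPsa hmono hPinfsa hPinfpos hstrong hPC
end
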